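/- Dissipativity of the upwind convection term for a discretely divergence-free flux: Let T be a finite set equipped with an adjacency relation 'adj' that is symmetric (K adj L ↔ L adj K) and irreflexive (never K adj K). Let a : T × T → ℝ be antisymmetric on adjacent pairs (a(K,L) = −a(L,K) whenever K adj L) and discretely divergence-free, i.e., Σ_{L : L adj K} a(K,L) = 0 for every K ∈ T. For e : T → ℝ define the upwind value up(K,L) := e(K) if a(K,L) ≥ 0 and up(K,L) := e(L) if a(K,L) < 0. Then Σ_{K∈T} Σ_{L : L adj K} a(K,L)·up(K,L)·e(K) ≥ 0. -/
import Mathlib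


/-- Dissipativity of the upwind convection term for a discretely divergence-free flux
(the estimate for the term IV₂,₂ in the proof of Lemma 6.6): for an antisymmetric,
discretely divergence-free coefficient `a` on a symmetric irreflexive adjacency structure,
the upwind discretization tested against the error `e` is nonnegative. -/
theorem upwind_dissipative (T : Type*) [Fintype T]
    (adj : T → T → Prop) [DecidableRel adj]
    (hsymm : ∀ K L, adj K L ↔ adj L K)
    (hirr : ∀ K, ¬ adj K K)
    (a : T → T → ℝ)
    (hanti : ∀ K L, adj K L → a K L = - a L K)
    (hdiv : ∀ K, ∑ L ∈ Finset.univ.filter (fun L => adj K L), a K L = 0)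
    (e : T → ℝ) :
    0 ≤ ∑ K : T, ∑ L ∈ Finset.univ.filter (fun L => adj K L),
        a K L * (if 0 ≤ a K L then e K else e L) * e K := by
  set F : T → T → ℝ := fun K L =>
    if adj K L then a K L * (if 0 ≤ a K L then e K else e L) * e K else 0 with hF
  have hS : (∑ K : T, ∑ L ∈ Finset.univ.filter (fun L => adj K L),
      a K L * (if 0 ≤ a K L then e K else e L) * e K)
      = ∑ K : T, ∑ L : T, F K L := by
    refine Finset.sum_congr rfl fun K _ => ?_
    rw [Finset.sum_filter]
  -- zero sums from divergence-free property
  have h1 : (∑ K : T, ∑ L : T, (if adj K L then a K L * e K ^ 2 else 0)) = 0 := by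
    refine Finset.sum_eq_zero fun K _ => ?_
    rw [← Finset.sum_filter]
    have : (∑ L ∈ Finset.univ.filter (fun L => adj K L), a K L * e K ^ 2)
        = (∑ L ∈ Finset.univ.filter (fun L => adj K L), a K L) * e K ^ 2 := by
      rw [Finset.sum_mul]
    rw [this, hdiv K, zero_mul]
  have h2 : (∑ K : T, ∑ L : T, (if adj K L then a L K * e L ^ 2 else 0)) = 0 := by
    rw [Finset.sum_comm]
    refine Finset.sum_eq_zero fun L _ => ?_
    have : (∑ K : T, (if adj K L then a L K * e L ^ 2 else 0))
        = ∑ K : T, (if adj L K then a L K * e L ^ 2 else 0) := by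
      refine Finset.sum_congr rfl fun K _ => ?_
      simp [hsymm K L]
    rw [this, ← Finset.sum_filter]
    have : (∑ K ∈ Finset.univ.filter (fun K => adj L K), a L K * e L ^ 2)
        = (∑ K ∈ Finset.univ.filter (fun K => adj L K), a L K) * e L ^ 2 := by
      rw [Finset.sum_mul]
    rw [this, hdiv L, zero_mul]
  -- pointwise nonnegativity of the symmetrized quantity
  have hpt : ∀ K L : T, 0 ≤ F K L + F L K
      - (1/2) * ((if adj K L then a K L * e K ^ 2 else 0)
                + (if adj K L then a L K * e L ^ 2 else 0)) := by
    intro K L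
    by_cases h : adj K L
    · have h' : adj L K := (hsymm K L).mp h
      have hb : a K L = - a L K := hanti K L h
      simp only [hF, h, h', if_true]
      rcases lt_trichotomy (a K L) 0 with hlt | heq | hgt
      · have h1' : ¬ (0 ≤ a K L) := not_le.mpr hlt
        have h2' : 0 ≤ a L K := by linarith
        rw [if_neg h1', if_pos h2']
        nlinarith [sq_nonneg (e K - e L)]
      · have h2' : a L K = 0 := by linarith
        simp [heq, h2']
      · have h1' : 0 ≤ a K L := le_of_lt hgt
        have h2' : ¬ (0 ≤ a L K) := by
          intro hc; nlinarith
        rw [if_pos h1', if_neg h2']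
        nlinarith [sq_nonneg (e K - e L)]
    · have h' : ¬ adj L K := fun hc => h ((hsymm L K).mp hc)
      simp [hF, h, h']
  have hsum : 0 ≤ ∑ K : T, ∑ L : T, (F K L + F L K
      - (1/2) * ((if adj K L then a K L * e K ^ 2 else 0)
                + (if adj K L then a L K * e L ^ 2 else 0))) :=
    Finset.sum_nonneg fun K _ => Finset.sum_nonneg fun L _ => hpt K L
  have hexp : (∑ K : T, ∑ L : T, (F K L + F L K
      - (1/2) * ((if adj K L then a K L * e K ^ 2 else 0)
                + (if adj K L then a L K * e L ^ 2 else 0))))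
      = (∑ K : T, ∑ L : T, F K L) + (∑ K : T, ∑ L : T, F L K)
        - (1/2) * ((∑ K : T, ∑ L : T, (if adj K L then a K L * e K ^ 2 else 0))
                  + (∑ K : T, ∑ L : T, (if adj K L then a L K * e L ^ 2 else 0))) := by
    simp [Finset.sum_sub_distrib, Finset.sum_add_distrib, Finset.mul_sum, mul_add]
  have hswap : (∑ K : T, ∑ L : T, F L K) = ∑ K : T, ∑ L : T, F K L :=
    Finset.sum_comm
  rw [hexp, hswap, h1, h2] at hsum
  rw [hS]
  linarith
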